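/- Let k = 𝔽_q and let a ∈ M_n(k) be a regular (cyclic) matrix whose characteristic polynomial is f(t)^e for a monic irreducible f of degree d (so n = de). Then the group of units of the centralizer of a in GL_n(k) is isomorphic to the unit group of 𝔽_{q^d}[u]/(u^e), and its order is q^n(1 - q^{-d}) = q^{de} - q^{d(e-1)}. -/

import Mathlib

open Polynomial

/-!
Since `a` is regular with minimal polynomial `f ^ e`, some vector `v` is not killed by
`f(a) ^ (e - 1)`. In the PID `k[X]` the order ideal of `v` is then `(f ^ e)`, so `p ↦ p(a) v` maps
onto `kⁿ`, and a matrix commuting with `a` agrees with a polynomial in `a` on all of `kⁿ`. Hence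
the centralizer is the unit group of `k[X]/(f ^ e)`, whose units are the elements outside the
nilpotent ideal `(f)/(f ^ e)` of size `q ^ (d (e - 1))`.

For the isomorphism: raising to the power `q ^ e` is a `k`-algebra endomorphism of `k[X]/(f ^ e)`
sending `X` to a root of `f`, which embeds `𝔽_{q^d} ≅ k[X]/(f)` into `k[X]/(f ^ e)`. Extending it
by `u ↦ f` gives a map `𝔽_{q^d}[u]/(u ^ e) → k[X]/(f ^ e)`; it is injective because
`h(f)` is a unit whenever `h(0) ≠ 0`, and both rings have `q ^ (d e)` elements.
-/

/-- The centralizer of a matrix `a` inside the unit group `GL_n(k)` of the matrix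
ring, as a subgroup. -/
def matrixUnitsCentralizer {k : Type*} [CommRing k] {n : ℕ}
    (a : Matrix (Fin n) (Fin n) k) : Subgroup (Matrix (Fin n) (Fin n) k)ˣ where
  carrier := {g | (g : Matrix (Fin n) (Fin n) k) * a = a * g}
  one_mem' := by simp
  mul_mem' := by
    intro x y hx hy
    simp only [Set.mem_setOf_eq, Units.val_mul] at *
    rw [mul_assoc, hy, ← mul_assoc, hx, mul_assoc]
  inv_mem' := by
    intro x hx
    simp only [Set.mem_setOf_eq] at *
    calc (↑x⁻¹ : Matrix (Fin n) (Fin n) k) * a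
        = ↑x⁻¹ * ((a * ↑x) * ↑x⁻¹) := by rw [mul_assoc a, Units.mul_inv, mul_one]
      _ = ↑x⁻¹ * ((↑x * a) * ↑x⁻¹) := by rw [hx]
      _ = (↑x⁻¹ * ↑x) * (a * ↑x⁻¹) := by noncomm_ring
      _ = a * ↑x⁻¹ := by rw [Units.inv_mul, one_mul]

theorem pow_dvd_of_mem_of_pow_pred_notMem {R : Type*} [CommRing R] [IsDomain R]
    [IsPrincipalIdealRing R] {f : R} (hf : Prime f) {I : Ideal R} {e : ℕ}
    (he : f ^ e ∈ I) (he' : f ^ (e - 1) ∉ I) {p : R} (hp : p ∈ I) : f ^ e ∣ p := by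
  open Submodule.IsPrincipal in
  obtain ⟨i, hie, hg⟩ := (dvd_prime_pow hf e).mp ((mem_iff_generator_dvd I).mp he)
  obtain rfl | hlt := hie.eq_or_lt
  · exact hg.symm.dvd.trans ((mem_iff_generator_dvd I).mp hp)
  · refine absurd ((mem_iff_generator_dvd I).mpr ?_) he'
    exact hg.dvd.trans (pow_dvd_pow f (by omega))

namespace Matrix

variable {k ι : Type*} [Field k] [Fintype ι] [DecidableEq ι]

def orderIdeal (a : Matrix ι ι k) (v : ι → k) : Ideal k[X] where
  carrier := {p | aeval a p *ᵥ v = 0}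
  add_mem' hp hq := by simp_all [add_mulVec]
  zero_mem' := by simp
  smul_mem' c p hp := by simp_all [← mulVec_mulVec]

theorem exists_surjective_aeval_mulVec {a : Matrix ι ι k} {f : k[X]} {e : ℕ} (he : 0 < e)
    (hf : Irreducible f) (hmin : minpoly k a = f ^ e)
    (hdeg : (minpoly k a).natDegree = Fintype.card ι) :
    ∃ v, Function.Surjective fun p : k[X] => aeval a p *ᵥ v := by
  have hfe : aeval a (f ^ (e - 1)) ≠ 0 := fun h => by
    have := (pow_dvd_pow_iff hf.ne_zero hf.not_isUnit).mp (hmin ▸ minpoly.dvd k a h)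
    omega
  obtain ⟨v, hv⟩ : ∃ v, aeval a (f ^ (e - 1)) *ᵥ v ≠ 0 := by
    by_contra! h
    exact hfe (ext_iff_mulVec.mpr fun w => by rw [h w, zero_mulVec])
  have hdvd : ∀ p ∈ orderIdeal a v, f ^ e ∣ p :=
    fun p => pow_dvd_of_mem_of_pow_pred_notMem hf.prime
      (show aeval a (f ^ e) *ᵥ v = 0 by rw [← hmin, minpoly.aeval, zero_mulVec]) hv
  let L : k[X] →ₗ[k] ι → k :=
    LinearMap.applyₗ v ∘ₗ toLin'.toLinearMap ∘ₗ (aeval a).toLinearMap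
  have hL : ∀ p, L p = aeval a p *ᵥ v := fun p => by simp [L]
  let L' := L ∘ₗ (degreeLT k (Fintype.card ι)).subtype
  have hinj : Function.Injective L' := by
    refine (injective_iff_map_eq_zero L').mpr fun ⟨p, hp⟩ h0 => ?_
    have hp0 := eq_zero_of_dvd_of_degree_lt (hdvd p ((hL p).symm.trans h0)) ?_
    · simpa using hp0
    rw [mem_degreeLT] at hp
    rwa [degree_eq_natDegree (pow_ne_zero e hf.ne_zero), ← hmin, hdeg]
  have hsurj : Function.Surjective L' := by
    refine (LinearMap.injective_iff_surjective_of_finrank_eq_finrank ?_).mp hinj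
    simp [(degreeLTEquiv k _).finrank_eq]
  refine ⟨v, fun u => ?_⟩
  obtain ⟨⟨p, _⟩, hp⟩ := hsurj u
  exact ⟨p, (hL p).symm.trans hp⟩

theorem exists_aeval_eq_of_commute {R : Type*} [CommRing R] {a b : Matrix ι ι R} {v : ι → R}
    (hv : Function.Surjective fun p : R[X] => aeval a p *ᵥ v) (hb : Commute b a) :
    ∃ p : R[X], aeval a p = b := by
  obtain ⟨p, hp : aeval a p *ᵥ v = b *ᵥ v⟩ := hv (b *ᵥ v)
  refine ⟨p, ext_iff_mulVec.mpr fun u => ?_⟩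
  obtain ⟨r, rfl⟩ := hv u
  have hbr : Commute b (aeval a r) :=
    Algebra.commute_of_mem_adjoin_singleton_of_commute (aeval_mem_adjoin_singleton R a) hb
  calc aeval a p *ᵥ aeval a r *ᵥ v = aeval a r *ᵥ aeval a p *ᵥ v := by
        rw [mulVec_mulVec, mulVec_mulVec, ← map_mul, ← map_mul, mul_comm]
    _ = b *ᵥ aeval a r *ᵥ v := by rw [hp, mulVec_mulVec, mulVec_mulVec, hbr.eq]

end Matrix

noncomputable def adjoinRootMinpolyEquivRange {k B : Type*} [Field k] [Ring B] [Algebra k B]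
    (x : B) : AdjoinRoot (minpoly k x) ≃ₐ[k] (aeval (R := k) x).range :=
  (Ideal.quotientEquivAlgOfEq k (minpoly.ker_aeval_eq_span_minpoly k x).symm).trans
    (Ideal.quotientKerEquivRange (A := k[X]) (B := B) (aeval x))

section Centralizer

variable {k : Type*} [Field k] {n : ℕ} {a : Matrix (Fin n) (Fin n) k}

theorem matrixUnitsCentralizer_eq_units_range_aeval
    (h : ∀ b, Commute b a → ∃ p : k[X], aeval a p = b) :
    matrixUnitsCentralizer a = (aeval (R := k) a).range.toSubmonoid.units := by
  ext u
  rw [Submonoid.mem_units_iff]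
  refine ⟨fun hu => ⟨h _ hu, h _ ((matrixUnitsCentralizer a).inv_mem hu)⟩, ?_⟩
  rintro ⟨⟨p, hp⟩, -⟩
  change Commute _ a
  rw [← hp]
  simpa using (Commute.all p X).map (aeval a)

noncomputable def matrixUnitsCentralizerEquiv
    (h : ∀ b, Commute b a → ∃ p : k[X], aeval a p = b) :
    matrixUnitsCentralizer a ≃* (AdjoinRoot (minpoly k a))ˣ :=
  (MulEquiv.subgroupCongr (matrixUnitsCentralizer_eq_units_range_aeval h)).trans <|
    (Submonoid.unitsEquivUnitsType _).trans <|
      Units.mapEquiv (adjoinRootMinpolyEquivRange a).symm.toMulEquiv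

end Centralizer

namespace Polynomial

theorem aeval_pow_card_pow {k A : Type*} [Field k] [Fintype k] [CommRing A]
    [Algebra k A] (f : k[X]) (x : A) (m : ℕ) :
    aeval (x ^ Fintype.card k ^ m) f = aeval x f ^ Fintype.card k ^ m := by
  induction m with
  | zero => simp
  | succ m ih =>
    rw [pow_succ, pow_mul, pow_mul, ← ih]
    exact aeval_algHom_apply (FiniteField.frobeniusAlgHom k A) _ f

section Eval₂

variable {K R : Type*} [Field K] [CommRing R] (φ : K →+* R) {t : R}

theorem isUnit_eval₂_of_isNilpotent (ht : IsNilpotent t) {h : K[X]}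
    (h0 : h.coeff 0 ≠ 0) : IsUnit (eval₂ φ t h) := by
  rw [← X_mul_divX_add h, eval₂_add, eval₂_mul, eval₂_X, eval₂_C]
  exact ((Commute.all t _).isNilpotent_mul_right ht).isUnit_add_right_of_commute
    ((isUnit_iff_ne_zero.mpr h0).map φ) (Commute.all _ _)

theorem X_pow_dvd_of_eval₂_eq_zero {e : ℕ} (hte : t ^ e = 0) (hte' : t ^ (e - 1) ≠ 0)
    {g : K[X]} (hg : eval₂ φ t g = 0) : X ^ e ∣ g := by
  rcases eq_or_ne g 0 with rfl | hg0
  · exact dvd_zero _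
  obtain ⟨h, hgh, hXh⟩ := exists_eq_pow_rootMultiplicity_mul_and_not_dvd g hg0 0
  simp only [map_zero, sub_zero] at hgh hXh
  rw [hgh] at hg ⊢
  refine dvd_mul_of_dvd_left (pow_dvd_pow X ?_) h
  rw [eval₂_mul, eval₂_X_pow, (isUnit_eval₂_of_isNilpotent φ ⟨e, hte⟩ _).mul_left_eq_zero] at hg
  · by_contra! hlt
    exact hte' (pow_eq_zero_of_le (by omega) hg)
  · rwa [X_dvd_iff] at hXh

end Eval₂

end Polynomial

section NilpotentKernel

variable {B F : Type*} [CommRing B] [Field F] {π : B →+* F}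

theorem isUnit_iff_map_ne_zero_of_isNilpotent (hπ : Function.Surjective π)
    (hnil : ∀ x, π x = 0 → IsNilpotent x) {x : B} : IsUnit x ↔ π x ≠ 0 := by
  refine ⟨fun hx => (hx.map π).ne_zero, fun hx => ?_⟩
  obtain ⟨y, hy⟩ := hπ (π x)⁻¹
  have hxy : IsNilpotent (x * y - 1) := hnil _ (by simp [hy, hx])
  exact isUnit_of_mul_isUnit_left (by simpa using hxy.isUnit_add_one)

theorem natCard_units_add_natCard_ker [Finite B] (hπ : Function.Surjective π)
    (hnil : ∀ x, π x = 0 → IsNilpotent x) :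
    Nat.card Bˣ + Nat.card (RingHom.ker π) = Nat.card B := by
  classical
  have hunits : Bˣ ≃ {x : B // ¬π x = 0} :=
    Submonoid.unitsTypeEquivIsUnitSubmonoid.toEquiv.trans <| Equiv.subtypeEquivRight fun x =>
      (IsUnit.mem_submonoid_iff x).trans (isUnit_iff_map_ne_zero_of_isNilpotent hπ hnil)
  have hker : RingHom.ker π ≃ {x : B // π x = 0} :=
    Equiv.subtypeEquivRight fun _ => RingHom.mem_ker
  rw [Nat.card_congr hunits, Nat.card_congr hker, add_comm, ← Nat.card_sum]
  exact Nat.card_congr (Equiv.sumCompl _)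

end NilpotentKernel

namespace AdjoinRoot

variable {K : Type*} [Field K] {g : K[X]}

theorem natCard_eq (hg : g ≠ 0) : Nat.card (AdjoinRoot g) = Nat.card K ^ g.natDegree := by
  rw [Nat.card_congr (powerBasis hg).basis.equivFun.toEquiv, Nat.card_fun, Nat.card_fin,
    powerBasis_dim]

theorem finite [Finite K] (hg : g ≠ 0) : Finite (AdjoinRoot g) :=
  .of_equiv _ (powerBasis hg).basis.equivFun.toEquiv.symm

theorem natCard_units_pow {k : Type*} [Field k] [Finite k] {f : k[X]}
    (hf : Irreducible f) {e : ℕ} (he : 0 < e) :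
    Nat.card (AdjoinRoot (f ^ e))ˣ =
      Nat.card k ^ (f.natDegree * e) - Nat.card k ^ (f.natDegree * (e - 1)) := by
  have := Fact.mk hf
  let π : AdjoinRoot (f ^ e) →+* AdjoinRoot f :=
    Ideal.Quotient.factor (Ideal.span_singleton_le_span_singleton.mpr (dvd_pow_self f he.ne'))
  have hπ : Function.Surjective π := Ideal.Quotient.factor_surjective _
  have hnil : ∀ x, π x = 0 → IsNilpotent x := by
    intro x hx
    obtain ⟨g, rfl⟩ := mk_surjective x
    have hfg : f ∣ g := mk_eq_zero.mp hx
    exact ⟨e, by rw [← map_pow, mk_eq_zero]; exact pow_dvd_pow_of_dvd hfg e⟩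
  have hfe : f ^ e ≠ 0 := pow_ne_zero e hf.ne_zero
  have := finite hfe
  have hker : Nat.card (RingHom.ker π) * Nat.card k ^ f.natDegree =
      Nat.card k ^ (f.natDegree * e) := by
    rw [← natCard_eq hf.ne_zero,
      ← Nat.card_congr (RingHom.quotientKerEquivOfSurjective hπ).toEquiv,
      ← Submodule.card_eq_card_quotient_mul_card, natCard_eq hfe, natDegree_pow, mul_comm]
  have hkerCard : Nat.card (RingHom.ker π) = Nat.card k ^ (f.natDegree * (e - 1)) := by
    refine Nat.eq_of_mul_eq_mul_right (pow_pos Nat.card_pos _) (hker.trans ?_)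
    rw [← pow_add, ← mul_add_one, Nat.sub_one_add_one he.ne']
  have htotal := natCard_units_add_natCard_ker hπ hnil
  rw [natCard_eq hfe, natDegree_pow, mul_comm, hkerCard] at htotal
  omega

theorem nonempty_ringEquiv_X_pow {K R : Type*} [Field K] [Finite K] [CommRing R]
    [Finite R] (φ : K →+* R) {t : R} {e : ℕ} (hte : t ^ e = 0) (hte' : t ^ (e - 1) ≠ 0)
    (hcard : Nat.card R = Nat.card K ^ e) : Nonempty (AdjoinRoot (X ^ e : K[X]) ≃+* R) := by
  have hX : (X ^ e : K[X]) ≠ 0 := pow_ne_zero e X_ne_zero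
  have := finite hX
  let L := lift φ t (by rw [eval₂_X_pow, hte])
  have hinj : Function.Injective L := (injective_iff_map_eq_zero L).mpr fun x hx => by
    obtain ⟨g, rfl⟩ := mk_surjective x
    rw [lift_mk] at hx
    exact mk_eq_zero.mpr (X_pow_dvd_of_eval₂_eq_zero φ hte hte' hx)
  refine ⟨RingEquiv.ofBijective L ((Nat.bijective_iff_injective_and_card L).mpr ⟨hinj, ?_⟩)⟩
  rw [natCard_eq hX, natDegree_X_pow, hcard]

theorem nonempty_ringHom_of_card_eq {k K : Type*} [Field k] [Fintype k] [Field K]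
    [Fintype K] {f : k[X]} (hf : Irreducible f)
    (hK : Fintype.card K = Fintype.card k ^ f.natDegree) (e : ℕ) :
    Nonempty (K →+* AdjoinRoot (f ^ e)) := by
  have := Fact.mk hf
  have := finite hf.ne_zero
  let _ := Fintype.ofFinite (AdjoinRoot f)
  have hcard : Fintype.card K = Fintype.card (AdjoinRoot f) := by
    rw [hK, Fintype.card_eq_nat_card, Fintype.card_eq_nat_card, natCard_eq hf.ne_zero]
  have hroot : aeval (root (f ^ e) ^ Fintype.card k ^ e) f = 0 := by
    rw [aeval_pow_card_pow, aeval_eq]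
    refine pow_eq_zero_of_le (Nat.lt_pow_self Fintype.one_lt_card).le ?_
    rw [← map_pow, mk_self]
  exact ⟨(lift (algebraMap k _) _ hroot).comp (FiniteField.ringEquivOfCardEq hcard).toRingHom⟩

theorem nonempty_ringEquiv_X_pow_of_card_eq {k K : Type*} [Field k] [Fintype k] [Field K]
    [Fintype K] {f : k[X]} (hf : Irreducible f) {e : ℕ} (he : 0 < e)
    (hK : Fintype.card K = Fintype.card k ^ f.natDegree) :
    Nonempty (AdjoinRoot (X ^ e : K[X]) ≃+* AdjoinRoot (f ^ e)) := by
  obtain ⟨φ⟩ := nonempty_ringHom_of_card_eq hf hK e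
  have hfe : f ^ e ≠ 0 := pow_ne_zero e hf.ne_zero
  have := finite hfe
  refine nonempty_ringEquiv_X_pow φ (t := mk (f ^ e) f) ?_ ?_ ?_
  · rw [← map_pow, mk_self]
  · rw [← map_pow, Ne, mk_eq_zero, pow_dvd_pow_iff hf.ne_zero hf.not_isUnit]
    omega
  · rw [natCard_eq hfe, natDegree_pow, Nat.card_eq_fintype_card, Nat.card_eq_fintype_card, hK,
      ← pow_mul, mul_comm]

end AdjoinRoot

theorem stmt8_general (k : Type*) [Field k] [Fintype k] (q n d e : ℕ) (hq : Fintype.card k = q)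
    (he : 0 < e)
    (a : Matrix (Fin n) (Fin n) k) (hreg : a.charpoly = minpoly k a)
    (f : k[X]) (hirr : Irreducible f) (hfd : f.natDegree = d)
    (hchar : a.charpoly = f ^ e)
    (K : Type*) [Field K] [Fintype K] (hK : Fintype.card K = q ^ d) :
    Nonempty ((matrixUnitsCentralizer a) ≃*
        (Polynomial K ⧸ Ideal.span ({(X : Polynomial K) ^ e} : Set (Polynomial K)))ˣ) ∧
      Nat.card (matrixUnitsCentralizer a) = q ^ (d * e) - q ^ (d * (e - 1)) := by
  subst hq hfd
  have hmin : minpoly k a = f ^ e := hreg ▸ hchar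
  obtain ⟨v, hv⟩ := Matrix.exists_surjective_aeval_mulVec he hirr hmin
    (by rw [← hreg, Matrix.charpoly_natDegree_eq_dim, Fintype.card_fin])
  obtain ⟨Θ⟩ : Nonempty (matrixUnitsCentralizer a ≃* (AdjoinRoot (f ^ e))ˣ) :=
    hmin ▸ ⟨matrixUnitsCentralizerEquiv fun b hb => Matrix.exists_aeval_eq_of_commute hv hb⟩
  obtain ⟨E⟩ := AdjoinRoot.nonempty_ringEquiv_X_pow_of_card_eq hirr he hK
  refine ⟨⟨Θ.trans (Units.mapEquiv E.symm.toMulEquiv)⟩, ?_⟩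
  rw [Nat.card_congr Θ.toEquiv, AdjoinRoot.natCard_units_pow hirr he, Nat.card_eq_fintype_card]

/-- `k = 𝔽_q`, `a ∈ M_n(k)` regular with characteristic polynomial
`f^e`, `f` monic irreducible of degree `d`, `n = d·e`. Then the centralizer of `a`
in `GL_n(k)` is isomorphic to the unit group of `𝔽_{q^d}[u]/(u^e)` and has order
`q^(d·e) - q^(d·(e-1))`. -/
theorem stmt8 (k : Type*) [Field k] [Fintype k] (q n d e : ℕ) (hq : Fintype.card k = q)
    (hn : n = d * e) (he : 0 < e)
    (a : Matrix (Fin n) (Fin n) k) (hreg : a.charpoly = minpoly k a)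
    (f : k[X]) (hf : f.Monic) (hirr : Irreducible f) (hfd : f.natDegree = d)
    (hchar : a.charpoly = f ^ e)
    (K : Type*) [Field K] [Fintype K] (hK : Fintype.card K = q ^ d) :
    Nonempty ((matrixUnitsCentralizer a) ≃*
        (Polynomial K ⧸ Ideal.span ({(X : Polynomial K) ^ e} : Set (Polynomial K)))ˣ) ∧
      Nat.card (matrixUnitsCentralizer a) = q ^ (d * e) - q ^ (d * (e - 1)) :=
  stmt8_general k q n d e hq he a hreg f hirr hfd hchar K hK
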